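/- Let r ≥ 1 be an integer, let n ≥ 0 be an integer, and let (α;β) = (α₁,…,α_{r+1};β₁,…,β_r) ∈ 𝒰_r be such that α₁ = −n and no β_i + 1 is a non-positive integer. Then Σ_{j=0}^∞ (−n)_j (α₂)_j⋯(α_{r+1})_j/((β₁+1)_j⋯(β_r+1)_j · j!) = (α₁+1)_n (α₂+1)_n⋯(α_{r+1}+1)_n/((β₁+1)_n⋯(β_r+1)_n · n!); the series terminates since (−n)_j = 0 for j > n. -/
import Mathlib


noncomputable def poch (a : ℂ) (k : ℕ) : ℂ := Polynomial.eval a (ascPochhammer ℂ k)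

noncomputable def esym {n : ℕ} (v : Fin n → ℂ) (l : ℕ) : ℂ :=
  ∑ t ∈ Finset.powersetCard l (Finset.univ : Finset (Fin n)), ∏ i ∈ t, v i

def inU (r : ℕ) (α : Fin (r+1) → ℂ) (β : Fin r → ℂ) : Prop :=
  ∀ l : ℕ, 1 ≤ l → l ≤ r → esym α l = esym β l

lemma poch_zero (a : ℂ) : poch a 0 = 1 := by simp [poch]

lemma poch_succ (a : ℂ) (m : ℕ) : poch a (m+1) = poch a m * (a + m) := by
  simp [poch, ascPochhammer_succ_right]

lemma poch_succ_left (a : ℂ) (m : ℕ) : poch a (m+1) = a * poch (a+1) m := by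
  simp [poch, ascPochhammer_succ_left, Polynomial.eval_comp]

lemma poch_eq_prod (a : ℂ) (m : ℕ) :
    poch a m = ∏ k ∈ Finset.range m, (a + k) := by
  induction m with
  | zero => simp [poch_zero]
  | succ m ih => rw [poch_succ, ih, Finset.prod_range_succ]

lemma prod_add_esym {m : ℕ} (v : Fin m → ℂ) (x : ℂ) :
    ∏ i, (v i + x) = ∑ l ∈ Finset.range (m+1), esym v l * x ^ (m - l) := by
  classical
  rw [Finset.prod_add]
  rw [Finset.sum_powerset]
  simp only [Finset.card_univ, Fintype.card_fin]
  refine Finset.sum_congr rfl fun l hl => ?_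
  rw [esym, Finset.sum_mul]
  refine Finset.sum_congr rfl fun t ht => ?_
  rw [Finset.mem_powersetCard] at ht
  rw [Finset.prod_const]
  congr 1
  rw [Finset.card_sdiff_of_subset (Finset.subset_univ t), Finset.card_univ, Fintype.card_fin, ht.2]

lemma esym_zero {m : ℕ} (v : Fin m → ℂ) : esym v 0 = 1 := by
  simp [esym, Finset.powersetCard_zero]

lemma esym_top {m : ℕ} (v : Fin m → ℂ) : esym v m = ∏ i, v i := by
  have : (Finset.univ : Finset (Fin m)).powersetCard m = {Finset.univ} := by
    have := Finset.powersetCard_self (Finset.univ : Finset (Fin m))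
    rwa [Finset.card_univ, Fintype.card_fin] at this
  simp [esym, this]

/-- Terminating Slater summation (eq:newclass). -/
theorem terminating_slater_summation
    (r : ℕ) (hr : 1 ≤ r) (n : ℕ) (α : Fin (r+1) → ℂ) (β : Fin r → ℂ)
    (hU : inU r α β)
    (hα : α 0 = -(n : ℂ))
    (hβ : ∀ i : Fin r, ∀ m : ℕ, β i + 1 ≠ -(m : ℂ)) :
    ∑' j : ℕ, (∏ i, poch (α i) j) / ((∏ i, poch (β i + 1) j) * (j.factorial : ℂ))
      = (∏ i, poch (α i + 1) n) / ((∏ i, poch (β i + 1) n) * (n.factorial : ℂ)) := by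
  -- key polynomial identity
  have key : ∀ x : ℂ, ∏ i, (α i + x) = x * ∏ i, (β i + x) + ∏ i, α i := by
    intro x
    rw [prod_add_esym, prod_add_esym]
    rw [Finset.sum_range_succ (n := r + 1)]
    have h1 : ∀ l ∈ Finset.range (r+1), esym α l * x ^ (r + 1 - l)
        = x * (esym β l * x ^ (r - l)) := by
      intro l hl
      rw [Finset.mem_range] at hl
      have hx : x * x ^ (r - l) = x ^ (r + 1 - l) := by
        rw [← pow_succ']
        congr 1
        omega
      rcases Nat.eq_zero_or_pos l with h0 | h0
      · subst h0; rw [esym_zero, esym_zero, ← hx]; ring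
      · rw [hU l h0 (by omega), ← hx]; ring
    rw [Finset.sum_congr rfl h1, ← Finset.mul_sum]
    rw [esym_top]
    simp
  -- nonvanishing of β-factors
  have hβk : ∀ (i : Fin r) (k : ℕ), β i + 1 + (k : ℂ) ≠ 0 := by
    intro i k h
    exact hβ i k (by linear_combination h)
  have hB : ∀ j : ℕ, (∏ i, poch (β i + 1) j) ≠ 0 := by
    intro j
    refine Finset.prod_ne_zero_iff.mpr fun i _ => ?_
    rw [poch_eq_prod]
    exact Finset.prod_ne_zero_iff.mpr fun k _ => hβk i k
  have hfac : ∀ j : ℕ, ((j.factorial : ℂ)) ≠ 0 := fun j => by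
    exact_mod_cast (Nat.factorial_ne_zero j)
  -- terms for j > n vanish
  have hvan : ∀ j ∉ Finset.range (n+1),
      (∏ i, poch (α i) j) / ((∏ i, poch (β i + 1) j) * (j.factorial : ℂ)) = 0 := by
    intro j hj
    rw [Finset.mem_range, not_lt] at hj
    have h0 : poch (α 0) j = 0 := by
      rw [poch_eq_prod]
      refine Finset.prod_eq_zero (Finset.mem_range.mpr (show n < j by omega)) ?_
      rw [hα]; ring
    rw [Finset.prod_eq_zero (Finset.mem_univ 0) h0, zero_div]
  rw [tsum_eq_sum hvan]
  -- telescoping by induction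
  have main : ∀ m : ℕ,
      ∑ j ∈ Finset.range (m+1),
        (∏ i, poch (α i) j) / ((∏ i, poch (β i + 1) j) * (j.factorial : ℂ))
      = (∏ i, poch (α i + 1) m) / ((∏ i, poch (β i + 1) m) * (m.factorial : ℂ)) := by
    intro m
    induction m with
    | zero => simp [poch_zero]
    | succ m ih =>
      rw [Finset.sum_range_succ, ih]
      have eA : ∏ i, poch (α i) (m+1) = (∏ i, α i) * ∏ i, poch (α i + 1) m := by
        rw [← Finset.prod_mul_distrib]
        exact Finset.prod_congr rfl fun i _ => poch_succ_left (α i) m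
      have eA' : ∏ i, poch (α i + 1) (m+1)
          = (∏ i, poch (α i + 1) m) * ∏ i, (α i + (m+1)) := by
        rw [← Finset.prod_mul_distrib]
        refine Finset.prod_congr rfl fun i _ => ?_
        rw [poch_succ]; push_cast; ring
      have eB : ∏ i, poch (β i + 1) (m+1)
          = (∏ i, poch (β i + 1) m) * ∏ i, (β i + (m+1)) := by
        rw [← Finset.prod_mul_distrib]
        refine Finset.prod_congr rfl fun i _ => ?_
        rw [poch_succ]; push_cast; ring
      have eF : ((m+1).factorial : ℂ) = (m.factorial : ℂ) * (m+1 : ℂ) := by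
        rw [Nat.factorial_succ]; push_cast; ring
      rw [eA, eA', eB, eF]
      have hBm := hB m
      have hP : (∏ i, (β i + ((m:ℂ)+1))) ≠ 0 := by
        refine Finset.prod_ne_zero_iff.mpr fun i _ => ?_
        have := hβk i m
        intro h; apply this; linear_combination h
      have hm1 : ((m : ℂ) + 1) ≠ 0 := Nat.cast_add_one_ne_zero m
      have hkey := key ((m : ℂ) + 1)
      have hM : (m.factorial : ℂ) ≠ 0 := hfac m
      rw [div_add_div _ _ (mul_ne_zero hBm hM)
        (mul_ne_zero (mul_ne_zero hBm hP) (mul_ne_zero hM hm1)),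
        div_eq_div_iff (mul_ne_zero (mul_ne_zero hBm hM)
          (mul_ne_zero (mul_ne_zero hBm hP) (mul_ne_zero hM hm1)))
          (mul_ne_zero (mul_ne_zero hBm hP) (mul_ne_zero hM hm1))]
      linear_combination (-(∏ i, poch (α i + 1) m) * (∏ i, poch (β i + 1) m)^2 *
        (∏ i, (β i + ((m:ℂ)+1))) * (m.factorial : ℂ)^2 * ((m:ℂ)+1)) * hkey
  exact main n
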